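/- Let a₁,…,a_m be nonzero pairwise distinct complex numbers and f(t) = (t−a₁)···(t−a_m). Then the map sending x⊗g(t) ∈ ñ₊ to (x⊗g(t) mod I(t), g(a₁)·x, …, g(a_m)·x) induces a Lie algebra isomorphism ñ₊/I(t·f) ≅ (ñ₊/I(t)) ⊕ g ⊕ ··· ⊕ g (m copies of g). -/

import Mathlib

/- Common framework for formalizing statements from
   "Irreducible modules over affine Kac–Moody algebras which are locally finite
    over the positive part" (Guo–Zhao).

   Conventions:
   * `g` is a finite-dimensional simple complex Lie algebra.
   * The loop algebra `g ⊗ ℂ[t,t⁻¹]` is modelled by the vector space `ℤ →₀ g`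
     (`Finsupp.single p x` corresponds to `x ⊗ tᵖ`).
   * The affine algebra `ĝ = g ⊗ ℂ[t,t⁻¹] ⊕ ℂK` is any Lie algebra equipped with
     an `AffineAlg` structure (a linear equivalence with `(ℤ →₀ g) × ℂ` fixing the
     bracket on generators, where `(0,1)` is the central element `K`).
   * Similarly `t̃g = ĝ ⊕ ℂd` is any Lie algebra with an `AffineAlgD` structure on
     `(ℤ →₀ g) × ℂ × ℂ`, where `(0,1,0) = K` and `(0,0,1) = d`.
   * The current algebra `g ⊗ ℂ[t]` is `Polynomial ℂ ⊗[ℂ] g`, and the positive part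
     `ñ₊ = (g ⊗ tℂ[t]) ⊕ (n₊ ⊗ 1)` is any Lie algebra `nt` with an `NtAlg` structure:
     an injective Lie algebra morphism into the current algebra with range `ñ₊`.
   * Induced modules are specified by structures that pin them down uniquely up to
     isomorphism (`IndModule` via the PBW description `ℂ[d] ⊗ M`, and universal
     properties for induction from `ñ₊`).
-/

open scoped TensorProduct
open Polynomial

noncomputable section

namespace AffinePaper

variable (g : Type) [LieRing g] [LieAlgebra ℂ g]

/-- The current algebra `g ⊗ ℂ[t]` is a complex Lie algebra. -/
instance : LieAlgebra ℂ (Polynomial ℂ ⊗[ℂ] g) where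
  lie_smul c x y := by
    rw [← algebraMap_smul (Polynomial ℂ) c y, ← algebraMap_smul (Polynomial ℂ) c ⁅x, y⁆]
    exact lie_smul (algebraMap ℂ (Polynomial ℂ) c) x y

/-- The weight space of `ad H` on `g` for a functional `α` on a subalgebra `H`. -/
def wtSpace (H : LieSubalgebra ℂ g) (α : Module.Dual ℂ H) : Submodule ℂ g where
  carrier := {x : g | ∀ h : H, ⁅(h : g), x⁆ = α h • x}
  add_mem' := fun {a b} ha hb h => by rw [lie_add, ha h, hb h, smul_add]
  zero_mem' := fun h => by rw [lie_zero, smul_zero]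
  smul_mem' := fun c x hx h => by rw [lie_smul, hx h]; exact smul_comm c (α h) x

/-- `α` is a root of `(g, H)`. -/
def IsRootOf (H : LieSubalgebra ℂ g) (α : Module.Dual ℂ H) : Prop :=
  α ≠ 0 ∧ wtSpace g H α ≠ ⊥

/-- A triangular decomposition `g = n₋ ⊕ h ⊕ n₊` of `g` relative to a Cartan
subalgebra `H`, given by a positive system `P` of roots. -/
structure TriangularData where
  H : LieSubalgebra ℂ g
  nPos : LieSubalgebra ℂ g
  nNeg : LieSubalgebra ℂ g
  isCartan : H.IsCartanSubalgebra
  P : Set (Module.Dual ℂ H)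
  pos_isRoot : ∀ α ∈ P, IsRootOf g H α
  pos_neg : ∀ α, IsRootOf g H α → (α ∈ P ↔ -α ∉ P)
  nPos_eq : nPos.toSubmodule = ⨆ α ∈ P, wtSpace g H α
  nNeg_eq : nNeg.toSubmodule = ⨆ α ∈ P, wtSpace g H (-α)
  triang : nNeg.toSubmodule ⊔ H.toSubmodule ⊔ nPos.toSubmodule = ⊤

variable {g}

/-- The simple roots of a positive system: the positive roots that are not sums of
two positive roots. -/
def TriangularData.simpleRoots (D : TriangularData g) : Set (Module.Dual ℂ D.H) :=
  {α | α ∈ D.P ∧ ¬∃ β ∈ D.P, ∃ γ ∈ D.P, α = β + γ}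

/-- `θ` is the highest root. -/
def TriangularData.IsHighestRoot (D : TriangularData g) (θ : Module.Dual ℂ D.H) : Prop :=
  θ ∈ D.P ∧ ∀ α ∈ D.P, ¬ IsRootOf g D.H (θ + α)

/-- `lam ∈ h*` is dominant integral: it takes nonnegative integer values on all
coroots (elements `hc = ⁅e, f⁆ ∈ [g_α, g_{-α}]` with `α hc = 2`, `α` positive). -/
def IsDominantIntegral (D : TriangularData g) (lam : Module.Dual ℂ D.H) : Prop :=
  ∀ α ∈ D.P, ∀ (e f : g) (hc : D.H), e ∈ wtSpace g D.H α → f ∈ wtSpace g D.H (-α) →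
    ⁅e, f⁆ = (hc : g) → α hc = 2 → ∃ n : ℕ, lam hc = (n : ℂ)

variable (g)

/-- The subspace `I(f) = n₊ ⊗ f ℂ[t] + (h ⊕ n₋) ⊗ t f ℂ[t]` of the current algebra. -/
def idealI (D : TriangularData g) (f : Polynomial ℂ) : Submodule ℂ (Polynomial ℂ ⊗[ℂ] g) :=
  Submodule.span ℂ
    ({z | ∃ x ∈ D.nPos, ∃ p : Polynomial ℂ, z = (f * p) ⊗ₜ[ℂ] x} ∪
     {z | ∃ x : g, x ∈ D.H.toSubmodule ⊔ D.nNeg.toSubmodule ∧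
        ∃ p : Polynomial ℂ, z = (X * f * p) ⊗ₜ[ℂ] x})

/-- The subspace `Σ_{α∈Δ₊∖Π} g_α ⊗ fℂ[t] + Σ_{α∈Π} g_α ⊗ tfℂ[t] +
Σ_{α∈Δ₊∖{θ}} g_{−α} ⊗ tfℂ[t] + g_{−θ} ⊗ t²fℂ[t] + h ⊗ tfℂ[t]` of the current
algebra (`θ` the highest root); for `f = 1` this is the subspace `K` of Lemma 4.2. -/
def bigK (D : TriangularData g) (θ : Module.Dual ℂ D.H) (f : Polynomial ℂ) :
    Submodule ℂ (Polynomial ℂ ⊗[ℂ] g) :=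
  Submodule.span ℂ
    ({z | ∃ α ∈ D.P, α ∉ D.simpleRoots ∧
        ∃ x ∈ wtSpace g D.H α, ∃ p : Polynomial ℂ, z = (f * p) ⊗ₜ[ℂ] x} ∪
     {z | ∃ α ∈ D.simpleRoots,
        ∃ x ∈ wtSpace g D.H α, ∃ p : Polynomial ℂ, z = (X * f * p) ⊗ₜ[ℂ] x} ∪
     {z | ∃ α ∈ D.P, α ≠ θ ∧
        ∃ x ∈ wtSpace g D.H (-α), ∃ p : Polynomial ℂ, z = (X * f * p) ⊗ₜ[ℂ] x} ∪
     {z | ∃ x ∈ wtSpace g D.H (-θ), ∃ p : Polynomial ℂ, z = (X ^ 2 * f * p) ⊗ₜ[ℂ] x} ∪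
     {z | ∃ x ∈ D.H, ∃ p : Polynomial ℂ, z = (X * f * p) ⊗ₜ[ℂ] x})

/-- The subspace of the current algebra corresponding to
`ñ₊ = (g ⊗ tℂ[t]) ⊕ (n₊ ⊗ 1)`. -/
def ntModel (D : TriangularData g) : Submodule ℂ (Polynomial ℂ ⊗[ℂ] g) :=
  Submodule.span ℂ
    ({z | ∃ (k : ℕ) (x : g), 1 ≤ k ∧ z = (X ^ k : Polynomial ℂ) ⊗ₜ[ℂ] x} ∪
     {z | ∃ x ∈ D.nPos, z = (1 : Polynomial ℂ) ⊗ₜ[ℂ] x})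

/-- A realization of the Lie algebra `ñ₊`: a Lie algebra `nt` together with an
injective morphism to the current algebra with range `(g ⊗ tℂ[t]) ⊕ (n₊ ⊗ 1)`. -/
structure NtAlg (D : TriangularData g) (nt : Type) [LieRing nt] [LieAlgebra ℂ nt] where
  ι : nt →ₗ⁅ℂ⁆ Polynomial ℂ ⊗[ℂ] g
  inj : Function.Injective ι
  range_eq : LinearMap.range (ι.toLinearMap) = ntModel g D

/-- Evaluation of the current algebra at a point `a ∈ ℂ`: `x ⊗ p(t) ↦ p(a) • x`. -/
def ev (a : ℂ) : (Polynomial ℂ ⊗[ℂ] g) →ₗ[ℂ] g :=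
  (TensorProduct.lid ℂ g).toLinearMap ∘ₗ
    (TensorProduct.map (Polynomial.aeval a).toLinearMap LinearMap.id)

/-- The canonical embedding of the current algebra `g ⊗ ℂ[t]` into the model
`ℤ →₀ g` of the loop algebra `g ⊗ ℂ[t,t⁻¹]` (sending `x ⊗ tᵏ` to `single k x`). -/
def toLoop : (Polynomial ℂ ⊗[ℂ] g) →ₗ[ℂ] (ℤ →₀ g) :=
  (Finsupp.lmapDomain g ℂ (Nat.cast : ℕ → ℤ)) ∘ₗ
    (TensorProduct.finsuppScalarLeft ℂ g ℕ).toLinearMap ∘ₗ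
    (TensorProduct.congr ((Polynomial.toFinsuppIsoAlg ℂ).toLinearEquiv.trans
      (AddMonoidAlgebra.coeffLinearEquiv ℂ)) (LinearEquiv.refl ℂ g)).toLinearMap

/-- A weight vector of `ñ₊` (viewed inside the current algebra): a nonzero element
`x ⊗ tᵏ` with `x` in `h` or in a root space. -/
def IsWeightVec (D : TriangularData g) (w : Polynomial ℂ ⊗[ℂ] g) : Prop :=
  w ≠ 0 ∧ ∃ (k : ℕ) (x : g), w = (X ^ k : Polynomial ℂ) ⊗ₜ[ℂ] x ∧
    (x ∈ D.H ∨ ∃ α, IsRootOf g D.H α ∧ x ∈ wtSpace g D.H α)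

/-- An element `z` of a Lie algebra `L` acts locally finitely on a module `V`. -/
def ActsLocallyFinitely (L : Type) [LieRing L] (V : Type) [AddCommGroup V] [Module ℂ V]
    [LieRingModule L V] (z : L) : Prop :=
  ∀ v : V, ∃ W : Submodule ℂ V, v ∈ W ∧ FiniteDimensional ℂ W ∧ ∀ w ∈ W, ⁅z, w⁆ ∈ W

/-- A realization of the affine Lie algebra `ĝ = (g ⊗ ℂ[t,t⁻¹]) ⊕ ℂK` (without
derivation): a Lie algebra `gh` with a linear equivalence `e` with the model space
`(ℤ →₀ g) × ℂ` such that `e (single p x, 0) = x ⊗ tᵖ`, `e (0,1) = K` is central, and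
`[x ⊗ tᵖ, y ⊗ t^q] = [x,y] ⊗ t^{p+q} + p δ_{p+q,0} κ(x,y) K`, `κ` the Killing form. -/
structure AffineAlg (gh : Type) [LieRing gh] [LieAlgebra ℂ gh] where
  e : ((ℤ →₀ g) × ℂ) ≃ₗ[ℂ] gh
  brkt : ∀ (p q : ℤ) (x y : g),
    ⁅e (Finsupp.single p x, 0), e (Finsupp.single q y, 0)⁆ =
      e (Finsupp.single (p + q) ⁅x, y⁆,
        if p + q = 0 then (p : ℂ) * killingForm ℂ g x y else 0)
  central : ∀ z : gh, ⁅e (0, 1), z⁆ = 0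

/-- A realization of the affine Kac–Moody algebra `t̃g = (g ⊗ ℂ[t,t⁻¹]) ⊕ ℂK ⊕ ℂd`:
as in `AffineAlg`, with moreover `e (0,0,1) = d` satisfying `[d, x ⊗ tᵖ] = p x ⊗ tᵖ`. -/
structure AffineAlgD (gt : Type) [LieRing gt] [LieAlgebra ℂ gt] where
  e : ((ℤ →₀ g) × ℂ × ℂ) ≃ₗ[ℂ] gt
  brkt : ∀ (p q : ℤ) (x y : g),
    ⁅e (Finsupp.single p x, 0, 0), e (Finsupp.single q y, 0, 0)⁆ =
      e (Finsupp.single (p + q) ⁅x, y⁆,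
        (if p + q = 0 then (p : ℂ) * killingForm ℂ g x y else 0), 0)
  central : ∀ z : gt, ⁅e (0, 1, 0), z⁆ = 0
  dBrkt : ∀ (p : ℤ) (x : g),
    ⁅e (0, 0, 1), e (Finsupp.single p x, 0, 0)⁆ = e (Finsupp.single p ((p : ℂ) • x), 0, 0)

variable {g}

/-- `V` is the irreducible highest weight `g`-module with highest weight `lam`:
it is irreducible and has a highest weight vector of weight `lam`. -/
structure IsHWModule (D : TriangularData g) (lam : Module.Dual ℂ D.H) (V : Type)
    [AddCommGroup V] [Module ℂ V] [LieRingModule g V] [LieModule ℂ g V] where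
  v₀ : V
  ne : v₀ ≠ 0
  hwN : ∀ x ∈ D.nPos, ⁅x, v₀⁆ = 0
  hwH : ∀ h : D.H, ⁅(h : g), v₀⁆ = lam h • v₀
  irred : IsSimpleOrder (LieSubmodule ℂ g V)

/-- `E` is the evaluation module `E(λ, a) = V₁ ⊗ ⋯ ⊗ V_m` over `ĝ`:
`(x ⊗ tᵏ) · (v₁ ⊗ ⋯ ⊗ v_m) = Σᵢ aᵢᵏ v₁ ⊗ ⋯ ⊗ (x · vᵢ) ⊗ ⋯ ⊗ v_m`, and `K` acts by `0`. -/
structure EvalModule {gh : Type} [LieRing gh] [LieAlgebra ℂ gh] (A : AffineAlg g gh)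
    {m : ℕ} (a : Fin m → ℂ) (V : Fin m → Type) [∀ i, AddCommGroup (V i)]
    [∀ i, Module ℂ (V i)] [∀ i, LieRingModule g (V i)] [∀ i, LieModule ℂ g (V i)]
    (E : Type) [AddCommGroup E] [Module ℂ E] [LieRingModule gh E] [LieModule ℂ gh E] where
  ψ : E ≃ₗ[ℂ] PiTensorProduct ℂ V
  act : ∀ (k : ℤ) (x : g) (v : ∀ i, V i),
    ⁅A.e (Finsupp.single k x, 0), ψ.symm (PiTensorProduct.tprod ℂ v)⁆ =
      ∑ i, (a i) ^ k • ψ.symm (PiTensorProduct.tprod ℂ (Function.update v i ⁅x, v i⁆))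
  kAct : ∀ w : E, ⁅A.e (0, 1), w⁆ = 0

/-- `V` is the `t̃g`-module `M[d] = Ind_{ĝ}^{t̃g} M` induced from a `ĝ`-module `M`.
As a vector space `M[d] = ℂ[d] ⊗ M` (modelled by `ℕ →₀ M`, `single n v = dⁿ ⊗ v`);
`d` shifts the degree and `ĝ` acts on `d⁰ ⊗ M` as on `M`.  These data determine the
`t̃g`-module structure uniquely. -/
structure IndModule {gh gt : Type} [LieRing gh] [LieAlgebra ℂ gh] [LieRing gt]
    [LieAlgebra ℂ gt] (T : AffineAlgD g gt) (A : AffineAlg g gh)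
    (M : Type) [AddCommGroup M] [Module ℂ M] [LieRingModule gh M]
    (V : Type) [AddCommGroup V] [Module ℂ V] [LieRingModule gt V] where
  φ : (ℕ →₀ M) ≃ₗ[ℂ] V
  dAct : ∀ (n : ℕ) (v : M),
    ⁅T.e (0, 0, 1), φ (Finsupp.single n v)⁆ = φ (Finsupp.single (n + 1) v)
  rest : ∀ (u : (ℤ →₀ g) × ℂ) (v : M),
    ⁅T.e (u.1, u.2, 0), φ (Finsupp.single 0 v)⁆ = φ (Finsupp.single 0 ⁅A.e u, v⁆)

attribute [local instance] LieRing.ofAssociativeRing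

/-- `S` is the `ñ₊`-module `S(η, λ, a) = ℂ v_η ⊗ L(λ₁) ⊗ ⋯ ⊗ L(λ_m)`:
`(x ⊗ p(t)) · (v₁ ⊗ ⋯ ⊗ v_m) = η(x ⊗ p(t)) (v₁ ⊗ ⋯ ⊗ v_m) + Σᵢ p(aᵢ) v₁ ⊗ ⋯ ⊗ (x vᵢ) ⊗ ⋯ ⊗ v_m`. -/
structure SModule {nt : Type} [LieRing nt] [LieAlgebra ℂ nt] {D : TriangularData g}
    (NT : NtAlg g D nt) (η : nt →ₗ⁅ℂ⁆ ℂ) {m : ℕ} (a : Fin m → ℂ)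
    (V : Fin m → Type) [∀ i, AddCommGroup (V i)] [∀ i, Module ℂ (V i)]
    [∀ i, LieRingModule g (V i)]
    (S : Type) [AddCommGroup S] [Module ℂ S] [LieRingModule nt S] where
  ψ : S ≃ₗ[ℂ] PiTensorProduct ℂ V
  act : ∀ (z : nt) (v : ∀ i, V i),
    ⁅z, ψ.symm (PiTensorProduct.tprod ℂ v)⁆ = η z • ψ.symm (PiTensorProduct.tprod ℂ v) +
      ∑ i, ψ.symm (PiTensorProduct.tprod ℂ (Function.update v i ⁅ev g (a i) (NT.ι z), v i⁆))

/-- `V` is the irreducible highest weight `ĝ`-module with highest weight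
`γ ∈ (h ⊕ ℂK)*`. -/
structure HWModuleAff {gh : Type} [LieRing gh] [LieAlgebra ℂ gh] (A : AffineAlg g gh)
    (D : TriangularData g) (γ : Module.Dual ℂ (↥D.H × ℂ)) (V : Type)
    [AddCommGroup V] [Module ℂ V] [LieRingModule gh V] [LieModule ℂ gh V] where
  v₀ : V
  ne : v₀ ≠ 0
  hwLoop : ∀ k : ℕ, 1 ≤ k → ∀ x : g, ⁅A.e (Finsupp.single (k : ℤ) x, 0), v₀⁆ = 0
  hwN : ∀ x ∈ D.nPos, ⁅A.e (Finsupp.single 0 x, 0), v₀⁆ = 0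
  hwH : ∀ (h : D.H) (c : ℂ), ⁅A.e (Finsupp.single 0 (h : g), c), v₀⁆ = γ (h, c) • v₀
  irred : IsSimpleOrder (LieSubmodule ℂ gh V)

/-- `W` is an irreducible Whittaker `ĝ`-module of type `η : ñ₊ → ℂ`. -/
structure WhittakerAff {gh : Type} [LieRing gh] [LieAlgebra ℂ gh] (A : AffineAlg g gh)
    {D : TriangularData g} {nt : Type} [LieRing nt] [LieAlgebra ℂ nt] (NT : NtAlg g D nt)
    (η : nt →ₗ⁅ℂ⁆ ℂ) (W : Type)
    [AddCommGroup W] [Module ℂ W] [LieRingModule gh W] [LieModule ℂ gh W] where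
  v₀ : W
  ne : v₀ ≠ 0
  wh : ∀ z : nt, ⁅A.e (toLoop g (NT.ι z), 0), v₀⁆ = η z • v₀
  irred : IsSimpleOrder (LieSubmodule ℂ gh W)

/-- `MS` is the induced `ĝ`-module `Ind_{ñ₊}^{ĝ} S`, characterized by its universal
property. -/
structure IndFromNt {gh : Type} [LieRing gh] [LieAlgebra ℂ gh] (A : AffineAlg g gh)
    {D : TriangularData g} {nt : Type} [LieRing nt] [LieAlgebra ℂ nt] (NT : NtAlg g D nt)
    (S : Type) [AddCommGroup S] [Module ℂ S] [LieRingModule nt S]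
    (MS : Type) [AddCommGroup MS] [Module ℂ MS] [LieRingModule gh MS]
    [LieModule ℂ gh MS] where
  ι₀ : S →ₗ[ℂ] MS
  compat : ∀ (z : nt) (s : S), ⁅A.e (toLoop g (NT.ι z), 0), ι₀ s⁆ = ι₀ ⁅z, s⁆
  univ : ∀ (W : Type) [AddCommGroup W] [Module ℂ W] [LieRingModule gh W]
    [LieModule ℂ gh W] (f : S →ₗ[ℂ] W),
    (∀ (z : nt) (s : S), ⁅A.e (toLoop g (NT.ι z), 0), f s⁆ = f ⁅z, s⁆) →
    ∃! F : MS →ₗ⁅ℂ,gh⁆ W, F.toLinearMap ∘ₗ ι₀ = f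

/-- `M0` is the universal Whittaker module `M(η) = Ind_{ñ₊}^{ĝ} ℂ_η`, characterized
by its universal property. -/
structure UnivWhittaker {gh : Type} [LieRing gh] [LieAlgebra ℂ gh] (A : AffineAlg g gh)
    {D : TriangularData g} {nt : Type} [LieRing nt] [LieAlgebra ℂ nt] (NT : NtAlg g D nt)
    (η : nt →ₗ⁅ℂ⁆ ℂ) (M0 : Type) [AddCommGroup M0] [Module ℂ M0] [LieRingModule gh M0]
    [LieModule ℂ gh M0] where
  u₀ : M0
  rel : ∀ z : nt, ⁅A.e (toLoop g (NT.ι z), 0), u₀⁆ = η z • u₀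
  univ : ∀ (W : Type) [AddCommGroup W] [Module ℂ W] [LieRingModule gh W]
    [LieModule ℂ gh W] (w : W),
    (∀ z : nt, ⁅A.e (toLoop g (NT.ι z), 0), w⁆ = η z • w) →
    ∃! F : M0 →ₗ⁅ℂ,gh⁆ W, F u₀ = w

variable (g)

/-- A bundled Lie module over a complex Lie algebra `L`. -/
structure LieModOf (L : Type) [LieRing L] [LieAlgebra ℂ L] : Type 1 where
  carrier : Type
  [ac : AddCommGroup carrier]
  [mo : Module ℂ carrier]
  [lrm : LieRingModule L carrier]
  [lm : LieModule ℂ L carrier]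

attribute [instance] LieModOf.ac LieModOf.mo LieModOf.lrm LieModOf.lm

/-! Evaluation at a point is a Lie algebra morphism `g ⊗ ℂ[t] → g`. For `h` with `h(aᵢ) ≠ 0`,
Lagrange interpolation at the nodes `aᵢ` writes every element of `h ℂ[t] ⊗ N` as an element of
`h f ℂ[t] ⊗ N` plus an interpolant with prescribed values at the `aᵢ`. Applied to both summands
of `I(t) = t ℂ[t] ⊗ n₊ + t² ℂ[t] ⊗ (h ⊕ n₋)` this shows `I(t f) = I(t) ∩ ⋂ᵢ ker ev_{aᵢ}`, and
interpolants with values split along `g = n₊ + (h ⊕ n₋)` give surjectivity. -/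

section PolynomialTensor

variable {M : Type*} [AddCommGroup M] [Module ℂ M]

/-- The subspace `h ℂ[t] ⊗ N` of `ℂ[t] ⊗ M`. -/
def idealTensor (h : ℂ[X]) (N : Submodule ℂ M) : Submodule ℂ (ℂ[X] ⊗[ℂ] M) :=
  Submodule.span ℂ {z | ∃ x ∈ N, ∃ p : ℂ[X], z = (h * p) ⊗ₜ[ℂ] x}

lemma tmul_mem_idealTensor {h q : ℂ[X]} (hq : h ∣ q) {N : Submodule ℂ M} {x : M}
    (hx : x ∈ N) : q ⊗ₜ[ℂ] x ∈ idealTensor h N := by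
  obtain ⟨p, rfl⟩ := hq
  exact Submodule.subset_span ⟨x, hx, p, rfl⟩

lemma idealTensor_le_of_dvd {h k : ℂ[X]} (hk : h ∣ k) (N : Submodule ℂ M) :
    idealTensor k N ≤ idealTensor h N :=
  Submodule.span_le.2 fun _ ⟨_, hx, p, hz⟩ => hz ▸ tmul_mem_idealTensor (hk.mul_right p) hx

end PolynomialTensor

lemma nodal_dvd_of_eval_eq_zero {F ι : Type*} [Field F] [Fintype ι] {v : ι → F}
    (hv : Function.Injective v) {q : F[X]} (hq : ∀ i, q.eval (v i) = 0) :
    Lagrange.nodal Finset.univ v ∣ q :=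
  Finset.prod_dvd_of_coprime (fun _ _ _ _ hij => pairwise_coprime_X_sub_C hv hij)
    fun i _ => dvd_iff_isRoot.2 (hq i)

section Evaluation

variable {g : Type} [LieRing g] [LieAlgebra ℂ g]

@[simp]
lemma ev_tmul (c : ℂ) (p : ℂ[X]) (x : g) : ev g c (p ⊗ₜ[ℂ] x) = p.eval c • x := by
  simp [ev, coe_aeval_eq_eval]

lemma ev_lie (c : ℂ) (u v : ℂ[X] ⊗[ℂ] g) : ev g c ⁅u, v⁆ = ⁅ev g c u, ev g c v⁆ := by
  -- the bracket here is the base-change `Bracket` instance, which `simp` does not unify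
  -- with the `LieRing` one
  have zero_lie' : ∀ v : ℂ[X] ⊗[ℂ] g, ⁅(0 : ℂ[X] ⊗[ℂ] g), v⁆ = 0 :=
    fun v => zero_lie v
  have lie_zero' : ∀ u : ℂ[X] ⊗[ℂ] g, ⁅u, (0 : ℂ[X] ⊗[ℂ] g)⁆ = 0 :=
    fun u => lie_zero u
  have add_lie' : ∀ u₁ u₂ v : ℂ[X] ⊗[ℂ] g, ⁅u₁ + u₂, v⁆ = ⁅u₁, v⁆ + ⁅u₂, v⁆ :=
    fun u₁ u₂ v => add_lie u₁ u₂ v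
  have lie_add' : ∀ u v₁ v₂ : ℂ[X] ⊗[ℂ] g, ⁅u, v₁ + v₂⁆ = ⁅u, v₁⁆ + ⁅u, v₂⁆ :=
    fun u v₁ v₂ => lie_add u v₁ v₂
  induction u using TensorProduct.induction_on with
  | zero => simp [zero_lie']
  | add u₁ u₂ h₁ h₂ => simp [add_lie', h₁, h₂]
  | tmul p x =>
    induction v using TensorProduct.induction_on with
    | zero => simp [lie_zero']
    | add v₁ v₂ h₁ h₂ => simp [lie_add', h₁, h₂]
    | tmul q y =>
      rw [LieAlgebra.ExtendScalars.bracket_tmul]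
      simp [smul_smul, mul_comm]

lemma ev_mem_of_mem_idealTensor {h : ℂ[X]} {N : Submodule ℂ g} {w : ℂ[X] ⊗[ℂ] g}
    (hw : w ∈ idealTensor h N) (c : ℂ) : ev g c w ∈ N :=
  (Submodule.span_le (p := N.comap (ev g c))).2
    (by rintro _ ⟨_, hx, _, rfl⟩; simpa using N.smul_mem _ hx) hw

lemma ev_eq_zero_of_mem_idealTensor {h : ℂ[X]} {c : ℂ} (hc : h.eval c = 0)
    {N : Submodule ℂ g} {w : ℂ[X] ⊗[ℂ] g} (hw : w ∈ idealTensor h N) : ev g c w = 0 :=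
  (Submodule.span_le (p := LinearMap.ker (ev g c))).2
    (by rintro _ ⟨_, _, _, rfl⟩; simp [hc]) hw

end Evaluation

section LagrangeLift

variable {ι : Type*} [Fintype ι] [DecidableEq ι]

def lagrangeLift {M : Type*} [AddCommGroup M] [Module ℂ M] (h : ℂ[X]) (v : ι → ℂ) :
    (ι → M) →ₗ[ℂ] ℂ[X] ⊗[ℂ] M :=
  ∑ i, TensorProduct.mk ℂ ℂ[X] M (C (h.eval (v i))⁻¹ * h * Lagrange.basis Finset.univ v i) ∘ₗ
    LinearMap.proj i

lemma lagrangeLift_apply {M : Type*} [AddCommGroup M] [Module ℂ M] (h : ℂ[X]) (v : ι → ℂ)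
    (c : ι → M) :
    lagrangeLift h v c =
      ∑ i, (C (h.eval (v i))⁻¹ * h * Lagrange.basis Finset.univ v i) ⊗ₜ[ℂ] c i := by
  simp [lagrangeLift]

lemma lagrangeLift_mem_idealTensor {M : Type*} [AddCommGroup M] [Module ℂ M] (h : ℂ[X])
    (v : ι → ℂ) {N : Submodule ℂ M} {c : ι → M} (hc : ∀ i, c i ∈ N) :
    lagrangeLift h v c ∈ idealTensor h N := by
  rw [lagrangeLift_apply]
  exact Submodule.sum_mem _ fun i _ =>
    tmul_mem_idealTensor ((dvd_mul_left h _).mul_right _) (hc i)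

variable {g : Type} [LieRing g] [LieAlgebra ℂ g] {h : ℂ[X]} {v : ι → ℂ}

lemma ev_lagrangeLift (hv : Function.Injective v) {j : ι} (hh : h.eval (v j) ≠ 0)
    (c : ι → g) : ev g (v j) (lagrangeLift h v c) = c j := by
  rw [lagrangeLift_apply, map_sum, Finset.sum_eq_single j]
  · simp [Lagrange.eval_basis_self hv.injOn (Finset.mem_univ j), hh]
  · intro i _ hij
    simp [Lagrange.eval_basis_of_ne hij (Finset.mem_univ j)]
  · simp

lemma sub_lagrangeLift_mem_idealTensor (hv : Function.Injective v)
    (hh : ∀ i, h.eval (v i) ≠ 0) {N : Submodule ℂ g} {w : ℂ[X] ⊗[ℂ] g}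
    (hw : w ∈ idealTensor h N) :
    w - lagrangeLift h v (fun i => ev g (v i) w) ∈
      idealTensor (h * Lagrange.nodal Finset.univ v) N := by
  let R := LinearMap.id - lagrangeLift h v ∘ₗ LinearMap.pi fun i => ev g (v i)
  refine (Submodule.span_le (p := (idealTensor _ N).comap R)).2 ?_ hw
  rintro _ ⟨x, hx, p, rfl⟩
  set q := p - Lagrange.interpolate Finset.univ v (fun i => p.eval (v i))
  have hR : R ((h * p) ⊗ₜ[ℂ] x) = (h * q) ⊗ₜ[ℂ] x := by
    simp only [R, LinearMap.sub_apply, LinearMap.id_apply, LinearMap.comp_apply,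
      LinearMap.pi_apply, lagrangeLift_apply, ev_tmul, ← TensorProduct.smul_tmul,
      ← TensorProduct.sum_tmul, ← TensorProduct.sub_tmul, q, Lagrange.interpolate_apply,
      mul_sub, Finset.mul_sum]
    congr 2
    refine Finset.sum_congr rfl fun i _ => ?_
    have hC : C (h.eval (v i)) * C (h.eval (v i))⁻¹ = 1 := by
      rw [← C_mul, mul_inv_cancel₀ (hh i), C_1]
    rw [eval_mul, smul_eq_C_mul, C_mul]
    linear_combination (h * C (p.eval (v i)) * Lagrange.basis Finset.univ v i) * hC
  have hq : Lagrange.nodal Finset.univ v ∣ q := nodal_dvd_of_eval_eq_zero hv fun i => by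
    rw [eval_sub, Lagrange.eval_interpolate_at_node _ hv.injOn (Finset.mem_univ i), sub_self]
  rw [SetLike.mem_coe, Submodule.mem_comap, hR]
  exact tmul_mem_idealTensor (mul_dvd_mul_left h hq) hx

lemma mem_idealTensor_mul_nodal (hv : Function.Injective v)
    (hh : ∀ i, h.eval (v i) ≠ 0) {N : Submodule ℂ g} {w : ℂ[X] ⊗[ℂ] g}
    (hw : w ∈ idealTensor h N) (hev : ∀ i, ev g (v i) w = 0) :
    w ∈ idealTensor (h * Lagrange.nodal Finset.univ v) N := by
  have hev' : (fun i => ev g (v i) w) = 0 := funext hev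
  simpa [hev'] using sub_lagrangeLift_mem_idealTensor hv hh hw

end LagrangeLift

section IdealI

variable {g : Type} [LieRing g] [LieAlgebra ℂ g] {D : TriangularData g}

lemma idealI_eq_sup (h : ℂ[X]) :
    idealI g D h = idealTensor h D.nPos.toSubmodule ⊔
      idealTensor (X * h) (D.H.toSubmodule ⊔ D.nNeg.toSubmodule) :=
  Submodule.span_union _ _

lemma idealI_le_of_dvd {h k : ℂ[X]} (hk : h ∣ k) : idealI g D k ≤ idealI g D h := by
  rw [idealI_eq_sup, idealI_eq_sup]
  exact sup_le_sup (idealTensor_le_of_dvd hk _)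
    (idealTensor_le_of_dvd (mul_dvd_mul_left X hk) _)

lemma ev_eq_zero_of_mem_idealI {h : ℂ[X]} {c : ℂ} (hc : h.eval c = 0)
    {w : ℂ[X] ⊗[ℂ] g} (hw : w ∈ idealI g D h) : ev g c w = 0 := by
  rw [idealI_eq_sup] at hw
  obtain ⟨u, hu, u', hu', rfl⟩ := Submodule.mem_sup.1 hw
  rw [map_add, ev_eq_zero_of_mem_idealTensor hc hu,
    ev_eq_zero_of_mem_idealTensor (by simp [hc]) hu', add_zero]

lemma idealTensor_X_le_ntModel (N : Submodule ℂ g) : idealTensor X N ≤ ntModel g D := by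
  refine Submodule.span_le.2 ?_
  rintro _ ⟨x, -, p, rfl⟩
  induction p using Polynomial.induction_on' with
  | add p q hp hq => rw [mul_add, TensorProduct.add_tmul]; exact add_mem hp hq
  | monomial n c =>
    rw [← C_mul_X_pow_eq_monomial, mul_left_comm, ← pow_succ', ← smul_eq_C_mul,
      ← TensorProduct.smul_tmul']
    exact Submodule.smul_mem _ _ (Submodule.subset_span (Or.inl ⟨n + 1, x, by omega, rfl⟩))

lemma idealI_X_le_ntModel : idealI g D X ≤ ntModel g D := by
  rw [idealI_eq_sup]
  exact sup_le (idealTensor_X_le_ntModel _)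
    ((idealTensor_le_of_dvd (dvd_mul_right X X) _).trans (idealTensor_X_le_ntModel _))

variable {ι : Type*} [Fintype ι] [DecidableEq ι] {v : ι → ℂ}

lemma exists_mem_idealI_X_ev_eq (hv : Function.Injective v) (hv0 : ∀ i, v i ≠ 0)
    (c : ι → g) : ∃ U ∈ idealI g D X, ∀ i, ev g (v i) U = c i := by
  have hdec : ∀ i, ∃ x ∈ D.nPos.toSubmodule,
      ∃ y ∈ D.H.toSubmodule ⊔ D.nNeg.toSubmodule, x + y = c i := by
    intro i
    have htop : D.nPos.toSubmodule ⊔ (D.H.toSubmodule ⊔ D.nNeg.toSubmodule) = ⊤ := by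
      rw [← D.triang]; ac_rfl
    exact Submodule.mem_sup.1 (htop ▸ Submodule.mem_top)
  choose x hx y hy hxy using hdec
  refine ⟨lagrangeLift X v x + lagrangeLift (X * X) v y, ?_, fun i => ?_⟩
  · rw [idealI_eq_sup]
    exact add_mem (Submodule.mem_sup_left (lagrangeLift_mem_idealTensor _ _ hx))
      (Submodule.mem_sup_right (lagrangeLift_mem_idealTensor _ _ hy))
  · rw [map_add, ev_lagrangeLift hv (by simpa using hv0 i),
      ev_lagrangeLift hv (by simpa using hv0 i), hxy]

lemma mem_idealI_X_mul_nodal_iff (hv : Function.Injective v) (hv0 : ∀ i, v i ≠ 0)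
    {w : ℂ[X] ⊗[ℂ] g} :
    w ∈ idealI g D (X * Lagrange.nodal Finset.univ v) ↔
      w ∈ idealI g D X ∧ ∀ i, ev g (v i) w = 0 := by
  refine ⟨fun hw => ⟨idealI_le_of_dvd (dvd_mul_right X _) hw, fun i =>
    ev_eq_zero_of_mem_idealI (by simp [Lagrange.eval_nodal_at_node]) hw⟩, ?_⟩
  rintro ⟨hw, hev⟩
  rw [idealI_eq_sup] at hw
  obtain ⟨u, hu, u', hu', rfl⟩ := Submodule.mem_sup.1 hw
  let x := fun i => ev g (v i) u
  let y := fun i => ev g (v i) u'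
  have hX : ∀ i, X.eval (v i) ≠ 0 := fun i => by simpa using hv0 i
  have hXX : ∀ i, (X * X).eval (v i) ≠ 0 := fun i => by simpa using hv0 i
  have hy : ∀ i, y i ∈ D.nPos.toSubmodule := fun i => by
    have hxy : x i + y i = 0 := by simpa [x, y] using hev i
    rw [eq_neg_of_add_eq_zero_right hxy]
    exact neg_mem (ev_mem_of_mem_idealTensor hu _)
  rw [idealI_eq_sup]
  have hu₁ := sub_lagrangeLift_mem_idealTensor hv hX hu
  have hu₂ := sub_lagrangeLift_mem_idealTensor hv hXX hu'
  rw [mul_assoc] at hu₂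
  -- the interpolant of the values vanishes at every node and, as `y = -x`, lies in `t ℂ[t] ⊗ n₊`
  have hL : lagrangeLift X v x + lagrangeLift (X * X) v y ∈
      idealTensor (X * Lagrange.nodal Finset.univ v) D.nPos.toSubmodule := by
    refine mem_idealTensor_mul_nodal hv hX (add_mem
      (lagrangeLift_mem_idealTensor _ _ fun i => ev_mem_of_mem_idealTensor hu _)
      (idealTensor_le_of_dvd (dvd_mul_right X X) _ (lagrangeLift_mem_idealTensor _ _ hy)))
      fun i => ?_
    rw [map_add, ev_lagrangeLift hv (hX i), ev_lagrangeLift hv (hXX i), ← map_add, hev i]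
  rw [show u + u' = (u - lagrangeLift X v x) + (u' - lagrangeLift (X * X) v y) +
    (lagrangeLift X v x + lagrangeLift (X * X) v y) by abel]
  exact add_mem (add_mem (Submodule.mem_sup_left hu₁) (Submodule.mem_sup_right hu₂))
    (Submodule.mem_sup_left hL)

end IdealI

/-- The quotient `ñ₊/I(t)` is represented by any Lie algebra `Q` with a surjective morphism
`π : ñ₊ → Q` whose kernel is `I(t)`. -/
theorem statement11_general (g : Type) [LieRing g] [LieAlgebra ℂ g] (D : TriangularData g)
    (nt : Type) [LieRing nt] [LieAlgebra ℂ nt] (NT : NtAlg g D nt)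
    (m : ℕ) (a : Fin m → ℂ) (ha : ∀ i, a i ≠ 0) (hinj : Function.Injective a)
    (f : Polynomial ℂ) (hf : f = ∏ i, (X - C (a i)))
    (Q : Type) [LieRing Q] [LieAlgebra ℂ Q] (π : nt →ₗ⁅ℂ⁆ Q)
    (hπsurj : Function.Surjective π)
    (hπker : ∀ z : nt, π z = 0 ↔ NT.ι z ∈ idealI g D X) :
    Function.Surjective
      (fun z : nt => ((π z, fun i => ev g (a i) (NT.ι z)) : Q × (Fin m → g))) ∧
    (∀ z w : nt, ∀ i, ev g (a i) (NT.ι ⁅z, w⁆) =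
      ⁅ev g (a i) (NT.ι z), ev g (a i) (NT.ι w)⁆) ∧
    (∀ z : nt, (π z = 0 ∧ ∀ i, ev g (a i) (NT.ι z) = 0) ↔
      NT.ι z ∈ idealI g D (X * f)) := by
  subst hf
  refine ⟨?_, fun z w i => by rw [LieHom.map_lie, ev_lie], fun z => ?_⟩
  · rintro ⟨q, c⟩
    obtain ⟨z₀, rfl⟩ := hπsurj q
    obtain ⟨U, hU, hUev⟩ :=
      exists_mem_idealI_X_ev_eq (D := D) hinj ha fun i => c i - ev g (a i) (NT.ι z₀)
    obtain ⟨z, hz⟩ : U ∈ LinearMap.range NT.ι.toLinearMap :=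
      NT.range_eq ▸ idealI_X_le_ntModel hU
    replace hz : NT.ι z = U := hz
    have hπz : π z = 0 := (hπker z).2 (hz ▸ hU)
    refine ⟨z₀ + z, Prod.ext (by simp [hπz]) (funext fun i => ?_)⟩
    simp [hz, hUev]
  · exact ((hπker z).and Iff.rfl).trans (mem_idealI_X_mul_nodal_iff hinj ha).symm

/-- the map `x ⊗ p(t) ↦ (x ⊗ p(t) mod I(t), p(a₁) x, …, p(a_m) x)`
induces a Lie algebra isomorphism `ñ₊ / I(tf) ≅ (ñ₊/I(t)) ⊕ g ⊕ ⋯ ⊕ g`.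
Here the quotient `ñ₊/I(t)` is represented by any Lie algebra `Q` with a surjective
morphism `π : ñ₊ → Q` whose kernel is `I(t)`, and the claim is that the combined
map is a Lie algebra morphism in each coordinate, is surjective onto
`Q × gᵐ`, and has kernel exactly `I(tf)`. -/
theorem statement11 (g : Type) [LieRing g] [LieAlgebra ℂ g] [FiniteDimensional ℂ g]
    [LieAlgebra.IsSimple ℂ g] (D : TriangularData g)
    (nt : Type) [LieRing nt] [LieAlgebra ℂ nt] (NT : NtAlg g D nt)
    (m : ℕ) (a : Fin m → ℂ) (ha : ∀ i, a i ≠ 0) (hinj : Function.Injective a)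
    (f : Polynomial ℂ) (hf : f = ∏ i, (X - C (a i)))
    (Q : Type) [LieRing Q] [LieAlgebra ℂ Q] (π : nt →ₗ⁅ℂ⁆ Q)
    (hπsurj : Function.Surjective π)
    (hπker : ∀ z : nt, π z = 0 ↔ NT.ι z ∈ idealI g D X) :
    Function.Surjective
      (fun z : nt => ((π z, fun i => ev g (a i) (NT.ι z)) : Q × (Fin m → g))) ∧
    (∀ z w : nt, ∀ i, ev g (a i) (NT.ι ⁅z, w⁆) =
      ⁅ev g (a i) (NT.ι z), ev g (a i) (NT.ι w)⁆) ∧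
    (∀ z : nt, (π z = 0 ∧ ∀ i, ev g (a i) (NT.ι z) = 0) ↔
      NT.ι z ∈ idealI g D (X * f)) :=
  statement11_general g D nt NT m a ha hinj f hf Q π hπsurj hπker

end AffinePaper
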